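/- If G is a graph on 7 vertices with exactly 5 vertices of degree 2 and 2 vertices of degree 1, and G is triangle-free with independence number 3, then G is isomorphic to the disjoint union of a 5-cycle and an edge. -/

import Mathlib

open Finset SimpleGraph
open scoped Classical

noncomputable section

/-- A finset of vertices is independent in `G`. -/
def IsIndep {V : Type*} (G : SimpleGraph V) (s : Finset V) : Prop :=
  ∀ u ∈ s, ∀ v ∈ s, ¬ G.Adj u v

/-- The independence number of a finite graph. -/
def indepNum {V : Type*} [Fintype V] (G : SimpleGraph V) : ℕ :=
  (Finset.univ.filter fun s : Finset V => IsIndep G s).sup Finset.card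

/-- The independence polynomial of a finite graph, evaluated at `x`. -/
def indepPoly {V : Type*} [Fintype V] (G : SimpleGraph V) (x : ℚ) : ℚ :=
  ∑ s ∈ Finset.univ.filter (fun s : Finset V => IsIndep G s), x ^ s.card

/-- The cycle graph on `ZMod n`. -/
def cycleG (n : ℕ) : SimpleGraph (ZMod n) :=
  SimpleGraph.fromRel (fun u v => u - v = 1)

/-- The closed neighborhood of a finset of vertices. -/
def closedNbhdF {V : Type*} (G : SimpleGraph V) (F : Finset V) : Set V :=
  ↑F ∪ {v | ∃ u ∈ F, G.Adj u v}

/-- `G` is a W₂ graph. -/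
def IsW2 {V : Type*} [Fintype V] (G : SimpleGraph V) : Prop :=
  2 ≤ Fintype.card V ∧
  ∀ A B : Finset V, IsIndep G A → IsIndep G B → Disjoint A B →
    ∃ A₀ B₀ : Finset V, IsIndep G A₀ ∧ IsIndep G B₀ ∧ A ⊆ A₀ ∧ B ⊆ B₀ ∧
      Disjoint A₀ B₀ ∧ A₀.card = _root_.indepNum G ∧ B₀.card = _root_.indepNum G

/-- A maximal independent set. -/
def IsMaxIndep {V : Type*} (G : SimpleGraph V) (s : Finset V) : Prop :=
  IsIndep G s ∧ ∀ v ∉ s, ¬ IsIndep G (insert v s)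

/-- `G` is well-covered: all maximal independent sets have size `indepNum G`. -/
def WellCovered {V : Type*} [Fintype V] (G : SimpleGraph V) : Prop :=
  ∀ s : Finset V, IsMaxIndep G s → s.card = _root_.indepNum G

/-- The disjoint union of a 5-cycle and a single edge, on seven vertices. -/
def c5k2 : SimpleGraph (Fin 7) :=
  SimpleGraph.fromRel (fun u v =>
    (u = 0 ∧ v = 1) ∨ (u = 1 ∧ v = 2) ∨ (u = 2 ∧ v = 3) ∨ (u = 3 ∧ v = 4) ∨
    (u = 4 ∧ v = 0) ∨ (u = 5 ∧ v = 6))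

/-!
If `x` and `y` are distinct and non-adjacent, any two vertices outside `N[x] ∪ N[y]` are adjacent,
since together with `x` and `y` they would otherwise form an independent set of size four. In a
triangle-free graph this leaves at most two vertices outside `N[x] ∪ N[y]`.

For the two vertices of degree one, `N[x] ∪ N[y]` has at most four elements, so they are adjacent
and form the `K₂`; the other five vertices have degree two and only see each other. Take one of
them, `v₀`, with neighbours `v₁, v₄`, and let `v₂, v₃` be the other neighbours of `v₁, v₄`. The
count for the non-adjacent pair `v₁, v₄` makes `v₀, …, v₄` distinct, and the first observation
for the pair `x, v₀` makes `v₂` adjacent to `v₃`. The resulting bijective homomorphism from `C₅ ∪ K₂` does not increase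
degrees, hence is an isomorphism.
-/

open Function

theorem List.nodup_of_length_le_card_toFinset {α : Type*} [DecidableEq α] {l : List α}
    (h : l.length ≤ l.toFinset.card) : l.Nodup :=
  Multiset.toFinset_card_eq_card_iff_nodup.1
    (le_antisymm (Multiset.toFinset_card_le (l : Multiset α)) h)

section Iso

variable {V W : Type*} [Fintype V] [Fintype W] {G : SimpleGraph V} {H : SimpleGraph W}

theorem SimpleGraph.Hom.map_neighborFinset_of_degree_le (f : H →g G) (hf : Injective f) {w : W}
    (hdeg : G.degree (f w) ≤ H.degree w) :
    (H.neighborFinset w).map ⟨f, hf⟩ = G.neighborFinset (f w) := by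
  refine Finset.eq_of_subset_of_card_le (fun u hu => ?_) (by simpa using hdeg)
  obtain ⟨v, hv, rfl⟩ := Finset.mem_map.1 hu
  simpa using f.map_adj ((H.mem_neighborFinset _ _).1 hv)

theorem SimpleGraph.Hom.adj_iff_of_degree_le (f : H →g G) (hf : Injective f)
    (hdeg : ∀ w, G.degree (f w) ≤ H.degree w) {v w : W} : G.Adj (f v) (f w) ↔ H.Adj v w := by
  refine ⟨fun h => ?_, f.map_adj⟩
  rw [← mem_neighborFinset, ← f.map_neighborFinset_of_degree_le hf (hdeg v)] at h
  simpa using h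

theorem SimpleGraph.Hom.nonempty_iso_of_degree_le (f : H →g G) (hf : Bijective f)
    (hdeg : ∀ w, G.degree (f w) ≤ H.degree w) : Nonempty (H ≃g G) :=
  ⟨⟨Equiv.ofBijective f hf, f.adj_iff_of_degree_le hf.1 hdeg⟩⟩

end Iso

theorem c5k2_degree (i : Fin 7) : c5k2.degree i = if i.val < 5 then 2 else 1 := by
  simp only [← card_neighborFinset_eq_degree, neighborFinset_eq_filter (G := c5k2)]
  fin_cases i <;> simp [c5k2] <;> decide

section Graph

variable {V : Type*} [Fintype V] {G : SimpleGraph V}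

theorem card_le_indepNum {s : Finset V} (h : IsIndep G s) : s.card ≤ _root_.indepNum G :=
  Finset.le_sup (Finset.mem_filter.2 ⟨Finset.mem_univ _, h⟩)

omit [Fintype V] in
theorem card_le_two_of_isClique (hT : G.CliqueFree 3) {s : Finset V}
    (hs : G.IsClique (s : Set V)) : s.card ≤ 2 := by
  by_contra! h
  obtain ⟨a, b, c, ha, hb, hc, hab, hac, hbc⟩ := Finset.two_lt_card_iff.1 h
  exact hT {a, b, c} (is3Clique_triple_iff.2 ⟨hs ha hb hab, hs ha hc hac, hs hb hc hbc⟩)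

theorem isClique_compl_closedNbhd_pair (hα : _root_.indepNum G ≤ 3) {x y : V} (hne : x ≠ y)
    (hxy : ¬G.Adj x y) :
    G.IsClique ↑({x, y} ∪ G.neighborFinset x ∪ G.neighborFinset y)ᶜ := by
  intro u hu v hv huv
  by_contra huv'
  simp only [Finset.coe_compl, Set.mem_compl_iff, Finset.mem_coe, Finset.mem_union,
    Finset.mem_insert, Finset.mem_singleton, mem_neighborFinset, not_or] at hu hv
  have hind : IsIndep G {x, y, u, v} := by
    simp [IsIndep, G.adj_comm, *]
  have hcard : ({x, y, u, v} : Finset V).card = 4 := by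
    simp [Finset.card_insert_of_notMem, *, Ne.symm]
  have := card_le_indepNum hind
  omega

theorem card_le_card_closedNbhd_pair_add_two (hT : G.CliqueFree 3)
    (hα : _root_.indepNum G ≤ 3) {x y : V} (hne : x ≠ y) (hxy : ¬G.Adj x y) :
    Fintype.card V ≤ ({x, y} ∪ G.neighborFinset x ∪ G.neighborFinset y).card + 2 := by
  have := card_le_two_of_isClique hT (isClique_compl_closedNbhd_pair hα hne hxy)
  rw [Finset.card_compl] at this
  omega

theorem card_le_degree_add_degree_add_four (hT : G.CliqueFree 3)
    (hα : _root_.indepNum G ≤ 3) {x y : V} (hne : x ≠ y) (hxy : ¬G.Adj x y) :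
    Fintype.card V ≤ G.degree x + G.degree y + 4 := by
  calc Fintype.card V
      ≤ ({x, y} ∪ G.neighborFinset x ∪ G.neighborFinset y).card + 2 :=
        card_le_card_closedNbhd_pair_add_two hT hα hne hxy
    _ ≤ ({x, y} : Finset V).card + (G.neighborFinset x).card + (G.neighborFinset y).card + 2 := by
        gcongr
        exact (Finset.card_union_le _ _).trans (by gcongr; exact Finset.card_union_le _ _)
    _ ≤ G.degree x + G.degree y + 4 := by
        simp only [card_neighborFinset_eq_degree]
        linarith [Finset.card_le_two (a := x) (b := y)]

theorem adj_of_degree_eq_one (hV : 6 < Fintype.card V) (hT : G.CliqueFree 3)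
    (hα : _root_.indepNum G ≤ 3) {x y : V} (hne : x ≠ y) (hx : G.degree x = 1)
    (hy : G.degree y = 1) : G.Adj x y := by
  by_contra hxy
  have := card_le_degree_add_degree_add_four hT hα hne hxy
  omega

theorem exists_neighborFinset_eq_pair {v a : V} (h : G.degree v = 2) (ha : G.Adj v a) :
    ∃ b, a ≠ b ∧ G.neighborFinset v = {a, b} := by
  obtain ⟨c, d, hcd, hN⟩ := Finset.card_eq_two.1 h
  have : a ∈ ({c, d} : Finset V) := by rw [← hN, mem_neighborFinset]; exact ha
  rcases Finset.mem_insert.1 this with rfl | h'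
  · exact ⟨d, hcd, hN⟩
  · rw [Finset.mem_singleton] at h'
    subst h'
    exact ⟨c, hcd.symm, by rw [hN, Finset.pair_comm]⟩

theorem neighborFinset_eq_singleton {v a : V} (h : G.degree v = 1) (ha : G.Adj v a) :
    G.neighborFinset v = {a} := by
  obtain ⟨b, hb⟩ := Finset.card_eq_one.1 h
  have : a ∈ ({b} : Finset V) := by rw [← hb, mem_neighborFinset]; exact ha
  rwa [Finset.mem_singleton.1 this]

theorem exists_degree_eq_one_pair (hn : Fintype.card V = 7)
    (h2 : (Finset.univ.filter fun v : V => G.degree v = 2).card = 5)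
    (h1 : (Finset.univ.filter fun v : V => G.degree v = 1).card = 2) :
    ∃ x y, x ≠ y ∧ G.degree x = 1 ∧ G.degree y = 1 ∧ ∀ v, v ≠ x → v ≠ y → G.degree v = 2 := by
  obtain ⟨x, y, hne, hD1⟩ := Finset.card_eq_two.1 h1
  have hmem : ∀ v, G.degree v = 1 ↔ v = x ∨ v = y := fun v => by
    simpa using congrArg (v ∈ ·) hD1
  have hx : G.degree x = 1 := (hmem x).2 (Or.inl rfl)
  have hy : G.degree y = 1 := (hmem y).2 (Or.inr rfl)
  have hD2 : (Finset.univ.filter fun v : V => G.degree v = 2) = {x, y}ᶜ := by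
    refine Finset.eq_of_subset_of_card_le (fun v hv => ?_) ?_
    · simp only [Finset.mem_filter, Finset.mem_univ, true_and] at hv
      simp only [Finset.mem_compl, Finset.mem_insert, Finset.mem_singleton, not_or]
      constructor <;> rintro rfl <;> omega
    · rw [Finset.card_compl, h2, ← hD1, h1, hn]
  refine ⟨x, y, hne, hx, hy, fun v hvx hvy => ?_⟩
  have : v ∈ Finset.univ.filter fun v : V => G.degree v = 2 := by simp [hD2, hvx, hvy]
  simpa using this

theorem ne_of_adj_of_degree_eq_one {x y u w : V} (hxy : G.Adj x y) (hx : G.degree x = 1)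
    (huw : G.Adj u w) (huy : u ≠ y) : w ≠ x := by
  rintro rfl
  have := (mem_neighborFinset _ _ _).2 huw.symm
  rw [neighborFinset_eq_singleton hx hxy, Finset.mem_singleton] at this
  exact huy this

theorem nodup_of_neighborFinset_eq_pair (hV : 7 ≤ Fintype.card V) (hT : G.CliqueFree 3)
    (hα : _root_.indepNum G ≤ 3) {a b c d e : V} (hab : a ≠ b) (hadj : ¬G.Adj a b)
    (ha : G.neighborFinset a = {c, d}) (hb : G.neighborFinset b = {c, e}) :
    [a, b, c, d, e].Nodup := by
  apply List.nodup_of_length_le_card_toFinset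
  have h := card_le_card_closedNbhd_pair_add_two hT hα hab hadj
  have hunion : ({a, b} ∪ {c, d} ∪ {c, e} : Finset V) = [a, b, c, d, e].toFinset := by
    ext; simp; tauto
  rw [ha, hb, hunion] at h
  change 5 ≤ _
  omega

theorem exists_five_cycle (hV : 7 ≤ Fintype.card V) (hT : G.CliqueFree 3)
    (hα : _root_.indepNum G ≤ 3) {x y : V} (hxy : G.Adj x y) (hx : G.degree x = 1)
    (hy : G.degree y = 1) (hdeg : ∀ v, v ≠ x → v ≠ y → G.degree v = 2) :
    ∃ v₀ v₁ v₂ v₃ v₄ : V, [v₀, v₁, v₂, v₃, v₄, x, y].Nodup ∧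
      G.Adj v₀ v₁ ∧ G.Adj v₁ v₂ ∧ G.Adj v₂ v₃ ∧ G.Adj v₃ v₄ ∧ G.Adj v₄ v₀ := by
  have hout : ∀ {u w}, G.Adj u w → u ≠ x → u ≠ y → w ≠ x ∧ w ≠ y := fun huw hux huy =>
    ⟨ne_of_adj_of_degree_eq_one hxy hx huw huy,
      ne_of_adj_of_degree_eq_one hxy.symm hy huw hux⟩
  obtain ⟨v₀, -, hv₀⟩ := Finset.exists_mem_notMem_of_card_lt_card (s := {x, y}) (t := univ)
    (by rw [Finset.card_univ]; linarith [Finset.card_le_two (a := x) (b := y)])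
  simp only [Finset.mem_insert, Finset.mem_singleton, not_or] at hv₀
  obtain ⟨v₁, v₄, h14, hN₀⟩ := Finset.card_eq_two.1 (hdeg v₀ hv₀.1 hv₀.2)
  have h01 : G.Adj v₀ v₁ := by simp [← mem_neighborFinset, hN₀]
  have h04 : G.Adj v₀ v₄ := by simp [← mem_neighborFinset, hN₀]
  obtain ⟨hv₁x, hv₁y⟩ := hout h01 hv₀.1 hv₀.2
  obtain ⟨hv₄x, hv₄y⟩ := hout h04 hv₀.1 hv₀.2
  obtain ⟨v₂, -, hN₁⟩ := exists_neighborFinset_eq_pair (hdeg v₁ hv₁x hv₁y) h01.symm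
  obtain ⟨v₃, -, hN₄⟩ := exists_neighborFinset_eq_pair (hdeg v₄ hv₄x hv₄y) h04.symm
  have h12 : G.Adj v₁ v₂ := by simp [← mem_neighborFinset, hN₁]
  have h43 : G.Adj v₄ v₃ := by simp [← mem_neighborFinset, hN₄]
  obtain ⟨hv₂x, hv₂y⟩ := hout h12 hv₁x hv₁y
  obtain ⟨hv₃x, hv₃y⟩ := hout h43 hv₄x hv₄y
  have h14' : ¬G.Adj v₁ v₄ := fun h => hT _ (is3Clique_triple_iff.2 ⟨h01, h04, h⟩)
  have hcycle := nodup_of_neighborFinset_eq_pair hV hT hα h14 h14' hN₁ hN₄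
  simp only [List.nodup_cons, List.mem_cons, List.not_mem_nil, List.nodup_nil, not_or,
    or_false, and_true] at hcycle
  have h0x : ¬G.Adj x v₀ := fun h => ne_of_adj_of_degree_eq_one hxy hx h.symm hv₀.2 rfl
  have h23 : G.Adj v₂ v₃ := by
    refine isClique_compl_closedNbhd_pair hα (Ne.symm hv₀.1) h0x ?_ ?_ ?_ <;>
      simp [neighborFinset_eq_singleton hx hxy, hN₀] <;> grind
  refine ⟨v₀, v₁, v₂, v₃, v₄, ?_, h01, h12, h23, h43.symm, h04.symm⟩
  simp only [List.nodup_cons, List.mem_cons, List.not_mem_nil, List.nodup_nil, not_or,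
    or_false, and_true]
  have := hxy.ne
  grind

theorem nonempty_iso_c5k2 (hn : Fintype.card V = 7) {v₀ v₁ v₂ v₃ v₄ x y : V}
    (hnodup : [v₀, v₁, v₂, v₃, v₄, x, y].Nodup) (h01 : G.Adj v₀ v₁) (h12 : G.Adj v₁ v₂)
    (h23 : G.Adj v₂ v₃) (h34 : G.Adj v₃ v₄) (h40 : G.Adj v₄ v₀) (hxy : G.Adj x y)
    (hx : G.degree x = 1) (hy : G.degree y = 1) (hdeg : ∀ v, v ≠ x → v ≠ y → G.degree v = 2) :
    Nonempty (G ≃g c5k2) := by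
  let f : c5k2 →g G :=
    { toFun := ![v₀, v₁, v₂, v₃, v₄, x, y]
      map_rel' := by
        rintro i j ⟨-, h | h⟩ <;>
          rcases h with ⟨rfl, rfl⟩ | ⟨rfl, rfl⟩ | ⟨rfl, rfl⟩ | ⟨rfl, rfl⟩ | ⟨rfl, rfl⟩ | ⟨rfl, rfl⟩ <;>
          first | assumption | exact Adj.symm ‹_› }
  have hf : Bijective f := (Fintype.bijective_iff_injective_and_card f).2
    ⟨List.nodup_ofFn.1 hnodup, by simp [hn]⟩
  have hdeg' : ∀ i, G.degree (f i) ≤ c5k2.degree i := by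
    intro i
    simp only [List.nodup_cons, List.mem_cons, List.not_mem_nil, List.nodup_nil, not_or,
      or_false, and_true] at hnodup
    obtain ⟨⟨-, -, -, -, h0x, h0y⟩, ⟨-, -, -, h1x, h1y⟩, ⟨-, -, h2x, h2y⟩, ⟨-, h3x, h3y⟩,
      ⟨h4x, h4y⟩, -⟩ := hnodup
    fin_cases i <;> rw [c5k2_degree] <;>
      first | exact (hdeg _ ‹_› ‹_›).le | exact hx.le | exact hy.le
  obtain ⟨e⟩ := f.nonempty_iso_of_degree_le hf hdeg'
  exact ⟨e.symm⟩

end Graph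

/-- a triangle-free graph on 7 vertices with exactly 5 vertices of degree 2
and 2 vertices of degree 1, and independence number 3, is isomorphic to `C₅ ∪ K₂`. -/
theorem stmt_17 {V : Type*} [Fintype V] (G : SimpleGraph V)
    (hn : Fintype.card V = 7)
    (h2 : (Finset.univ.filter fun v : V => G.degree v = 2).card = 5)
    (h1 : (Finset.univ.filter fun v : V => G.degree v = 1).card = 2)
    (hT : G.CliqueFree 3) (hα : _root_.indepNum G = 3) :
    Nonempty (G ≃g c5k2) := by
  obtain ⟨x, y, hne, hx, hy, hdeg⟩ := exists_degree_eq_one_pair hn h2 h1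
  have hxy : G.Adj x y := adj_of_degree_eq_one (by omega) hT hα.le hne hx hy
  obtain ⟨v₀, v₁, v₂, v₃, v₄, hnodup, h01, h12, h23, h34, h40⟩ :=
    exists_five_cycle hn.ge hT hα.le hxy hx hy hdeg
  exact nonempty_iso_c5k2 hn hnodup h01 h12 h23 h34 h40 hxy hx hy hdeg
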